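/- Let G be a connected weighted graph with distinct edge weights in which no edge is a bridge, and let T be its MST. The most vital edge of G — the edge whose removal maximizes the weight of the minimum spanning tree of the remaining graph — is an edge of T. -/

import Mathlib

open SimpleGraph

/-- `T` is a spanning tree of `G`: a subgraph that is a tree on all vertices. -/
def IsSpanningTree {V : Type*} (G T : SimpleGraph V) : Prop := T ≤ G ∧ T.IsTree

/-- Total weight of the edges of a graph. -/
noncomputable def gweight {V : Type*} [Fintype V] [DecidableEq V]
    (T : SimpleGraph V) (w : Sym2 V → ℝ) : ℝ :=
  ∑ e ∈ T.edgeSet.toFinite.toFinset, w e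

/-- `T` is a minimum spanning tree of `G` with respect to the weights `w`. -/
def IsMST {V : Type*} [Fintype V] [DecidableEq V]
    (G T : SimpleGraph V) (w : Sym2 V → ℝ) : Prop :=
  IsSpanningTree G T ∧
    ∀ T' : SimpleGraph V, IsSpanningTree G T' → gweight T w ≤ gweight T' w

/-- `e` lies on the fundamental cycle (w.r.t. tree `T`) of the non-tree edge `f`:
it is `f` itself or an edge of the tree path joining the endpoints of `f`. -/
def InFundCycle {V : Type*} (T : SimpleGraph V) (f e : Sym2 V) : Prop :=
  e = f ∨ ∃ (u v : V) (p : T.Walk u v), p.IsPath ∧ f = s(u, v) ∧ e ∈ p.edges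

section Aux

variable {V : Type*}

lemma sdiff_fromEdgeSet_eq (G : SimpleGraph V) (s : Set (Sym2 V)) :
    G \ fromEdgeSet s = G.deleteEdges s := rfl

lemma mem_edgeSet' {G : SimpleGraph V} {v w : V} : s(v, w) ∈ G.edgeSet ↔ G.Adj v w :=
  G.mem_edgeSet

lemma edge_rep {G : SimpleGraph V} {e : Sym2 V} (he : e ∈ G.edgeSet) :
    ∃ p q, e = s(p, q) ∧ G.Adj p q := by
  induction e using Sym2.ind with
  | _ p q => exact ⟨p, q, rfl, he⟩

lemma exists_crossing_edge {H : SimpleGraph V} (P : V → Prop) :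
    ∀ {u v : V} (p : H.Walk u v), P u → ¬ P v →
      ∃ x y, H.Adj x y ∧ s(x, y) ∈ p.edges ∧ P x ∧ ¬ P y := by
  intro u v p
  induction p with
  | nil => intro hu hv; exact absurd hu hv
  | @cons u c v h q ih =>
    intro hu hv
    by_cases hP : P c
    · obtain ⟨x, y, h1, h2, h3, h4⟩ := ih hP hv
      exact ⟨x, y, h1, List.mem_cons_of_mem _ h2, h3, h4⟩
    · exact ⟨u, c, h, by simp, hu, hP⟩

lemma reach_step {H : SimpleGraph V} {a b : V} :
    ∀ {u t : V} (_ : H.Walk u t),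
      ((H.deleteEdges {s(a, b)}).Reachable t a ∨ (H.deleteEdges {s(a, b)}).Reachable t b) →
      ((H.deleteEdges {s(a, b)}).Reachable u a ∨ (H.deleteEdges {s(a, b)}).Reachable u b) := by
  intro u t p
  induction p with
  | nil => exact id
  | @cons u c t h q ih =>
    intro ht
    by_cases he : s(u, c) = s(a, b)
    · rcases Sym2.eq_iff.mp he with ⟨rfl, rfl⟩ | ⟨rfl, rfl⟩
      · exact Or.inl (Reachable.refl _)
      · exact Or.inr (Reachable.refl _)
    · have hadj : (H.deleteEdges {s(a, b)}).Adj u c := by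
        rw [deleteEdges_adj]; exact ⟨h, by simpa using he⟩
      rcases ih ht with h1 | h1
      · exact Or.inl (hadj.reachable.trans h1)
      · exact Or.inr (hadj.reachable.trans h1)

/-- In a connected graph, after deleting one edge, every vertex still reaches one of
the two endpoints of the deleted edge. -/
lemma reach_endpoint {H : SimpleGraph V} (hH : H.Connected) (a b v : V) :
    (H.deleteEdges {s(a, b)}).Reachable v a ∨ (H.deleteEdges {s(a, b)}).Reachable v b := by
  obtain ⟨p⟩ := hH.preconnected v a
  exact reach_step p (Or.inl (Reachable.refl _))

lemma path_split {H : SimpleGraph V} {x y : V} :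
    ∀ {u t : V} (p : H.Walk u t), p.edges.Nodup → s(x, y) ∈ p.edges →
      ∃ z z', s(z, z') = s(x, y) ∧ (H.deleteEdges {s(x, y)}).Reachable u z ∧
        (H.deleteEdges {s(x, y)}).Reachable t z' := by
  intro u t p
  induction p with
  | nil => intro _ hm; simp at hm
  | @cons u c t h q ih =>
    intro hnd hm
    rw [Walk.edges_cons] at hm hnd
    rcases List.mem_cons.mp hm with heq | hmem
    · have hq : ∀ e ∈ q.edges, e ∉ ({s(x, y)} : Set (Sym2 V)) := by
        intro e hee
        simp only [Set.mem_singleton_iff]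
        rintro rfl
        exact (List.nodup_cons.mp hnd).1 (heq ▸ hee)
      exact ⟨u, c, heq.symm, Reachable.refl _, ⟨(q.toDeleteEdges {s(x, y)} hq).reverse⟩⟩
    · obtain ⟨z, z', h1, h2, h3⟩ := ih (List.nodup_cons.mp hnd).2 hmem
      have hne : s(u, c) ≠ s(x, y) := fun hh => (List.nodup_cons.mp hnd).1 (hh ▸ hmem)
      have hadj : (H.deleteEdges {s(x, y)}).Adj u c := by
        rw [deleteEdges_adj]; exact ⟨h, by simpa using hne⟩
      exact ⟨z, z', h1, hadj.reachable.trans h2, h3⟩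

lemma reachable_deleteEdges {G : SimpleGraph V} {a b : V}
    (hab : (G.deleteEdges {s(a, b)}).Reachable a b) :
    ∀ {u t : V}, G.Walk u t → (G.deleteEdges {s(a, b)}).Reachable u t := by
  intro u t p
  induction p with
  | nil => exact Reachable.refl _
  | @cons u c t h q ih =>
    refine Reachable.trans ?_ ih
    by_cases he : s(u, c) = s(a, b)
    · rcases Sym2.eq_iff.mp he with ⟨rfl, rfl⟩ | ⟨rfl, rfl⟩
      · exact hab
      · exact hab.symm
    · exact Adj.reachable (by rw [deleteEdges_adj]; exact ⟨h, by simpa using he⟩)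

lemma connected_deleteEdges {G : SimpleGraph V} (hG : G.Connected) {a b : V}
    (hab : (G.deleteEdges {s(a, b)}).Reachable a b) :
    (G.deleteEdges {s(a, b)}).Connected := by
  rw [connected_iff]
  refine ⟨fun u t => ?_, hG.nonempty⟩
  obtain ⟨p⟩ := hG.preconnected u t
  exact reachable_deleteEdges hab p

lemma exists_spanning_tree_aux [Fintype V] :
    ∀ (n : ℕ) (G : SimpleGraph V), G.edgeSet.ncard = n → G.Connected →
      ∃ T, T ≤ G ∧ T.IsTree := by
  intro n
  induction n using Nat.strong_induction_on with
  | _ n ih =>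
    intro G hn hG
    by_cases hac : G.IsAcyclic
    · exact ⟨G, le_refl _, ⟨hG, hac⟩⟩
    · rw [isAcyclic_iff_forall_edge_isBridge] at hac
      push_neg at hac
      obtain ⟨e, he, hbr⟩ := hac
      obtain ⟨a, b, rfl, hadj⟩ := edge_rep he
      rw [isBridge_iff] at hbr
      push_neg at hbr
      have hre : (G.deleteEdges {s(a, b)}).Reachable a b := by
        rw [← sdiff_fromEdgeSet_eq]
        exact hbr
      have hconn := connected_deleteEdges hG hre
      have hlt : (G.deleteEdges {s(a, b)}).edgeSet.ncard < n := by
        rw [edgeSet_deleteEdges, ← hn]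
        exact Set.ncard_diff_singleton_lt_of_mem he (Set.toFinite _)
      obtain ⟨T, h1, h2⟩ := ih _ hlt _ rfl hconn
      exact ⟨T, h1.trans (deleteEdges_le _), h2⟩

lemma exists_spanning_tree [Fintype V] (G : SimpleGraph V) (hG : G.Connected) :
    ∃ T, T ≤ G ∧ T.IsTree :=
  exists_spanning_tree_aux _ G rfl hG

lemma ncard_edgeSet_of_isTree [Fintype V] {H : SimpleGraph V} (hH : H.IsTree) :
    H.edgeSet.ncard + 1 = Fintype.card V := by
  classical
  have : Fintype H.edgeSet := (Set.toFinite _).fintype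
  rw [← coe_edgeFinset, Set.ncard_coe_finset]
  exact hH.card_edgeFinset

lemma isTree_of_connected_of_ncard [Fintype V] {H : SimpleGraph V} (hH : H.Connected)
    (hcard : H.edgeSet.ncard + 1 = Fintype.card V) : H.IsTree := by
  refine ⟨hH, ?_⟩
  rw [isAcyclic_iff_forall_edge_isBridge]
  intro e he
  by_contra hbr
  obtain ⟨a, b, rfl, hadj⟩ := edge_rep he
  rw [isBridge_iff] at hbr
  push_neg at hbr
  have hre : (H.deleteEdges {s(a, b)}).Reachable a b := by
    rw [← sdiff_fromEdgeSet_eq]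
    exact hbr
  have hconn := connected_deleteEdges hH hre
  obtain ⟨T, hle, hT⟩ := exists_spanning_tree _ hconn
  have h1 := ncard_edgeSet_of_isTree hT
  have h2 : T.edgeSet.ncard ≤ (H.deleteEdges {s(a, b)}).edgeSet.ncard :=
    Set.ncard_le_ncard (edgeSet_mono hle) (Set.toFinite _)
  have h3 : (H.deleteEdges {s(a, b)}).edgeSet.ncard < H.edgeSet.ncard := by
    rw [edgeSet_deleteEdges]
    exact Set.ncard_diff_singleton_lt_of_mem he (Set.toFinite _)
  omega

/-- The edge-swap lemma: removing an edge of a tree and adding back an edge joining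
the two resulting components yields a tree. -/
lemma swap_tree [Fintype V] {H : SimpleGraph V} (hH : H.IsTree) {a b x y : V}
    (hab : H.Adj a b) (hxy : x ≠ y) (hnm : s(x, y) ∉ H.edgeSet)
    (hcross :
      ((H.deleteEdges {s(a, b)}).Reachable a x ∧ (H.deleteEdges {s(a, b)}).Reachable b y) ∨
      ((H.deleteEdges {s(a, b)}).Reachable a y ∧ (H.deleteEdges {s(a, b)}).Reachable b x)) :
    (H.deleteEdges {s(a, b)} ⊔ fromEdgeSet {s(x, y)}).IsTree ∧
      (H.deleteEdges {s(a, b)} ⊔ fromEdgeSet {s(x, y)}).edgeSet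
        = (H.edgeSet \ {s(a, b)}) ∪ {s(x, y)} := by
  classical
  have hES : (H.deleteEdges {s(a, b)} ⊔ fromEdgeSet {s(x, y)}).edgeSet
      = (H.edgeSet \ {s(a, b)}) ∪ {s(x, y)} := by
    rw [edgeSet_sup, edgeSet_deleteEdges, edgeSet_fromEdgeSet]
    congr 1
    ext e
    simp only [Set.mem_diff, Set.mem_singleton_iff, Set.mem_setOf_eq, and_iff_left_iff_imp]
    rintro rfl
    simpa using hxy
  have hxyH' : (H.deleteEdges {s(a, b)} ⊔ fromEdgeSet {s(x, y)}).Adj x y := by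
    simp [fromEdgeSet_adj, hxy]
  have hle : H.deleteEdges {s(a, b)} ≤ H.deleteEdges {s(a, b)} ⊔ fromEdgeSet {s(x, y)} :=
    le_sup_left
  have hconn : (H.deleteEdges {s(a, b)} ⊔ fromEdgeSet {s(x, y)}).Connected := by
    rw [connected_iff]
    refine ⟨?_, ⟨a⟩⟩
    have key : ∀ v, (H.deleteEdges {s(a, b)} ⊔ fromEdgeSet {s(x, y)}).Reachable v a := by
      intro v
      rcases reach_endpoint hH.isConnected a b v with h | h
      · exact h.mono hle
      · rcases hcross with ⟨h1, h2⟩ | ⟨h1, h2⟩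
        · exact (h.mono hle).trans ((h2.mono hle).trans
            ((hxyH'.symm.reachable).trans (h1.mono hle).symm))
        · exact (h.mono hle).trans ((h2.mono hle).trans
            ((hxyH'.reachable).trans (h1.mono hle).symm))
    exact fun u v => (key u).trans (key v).symm
  have habm : s(a, b) ∈ H.edgeSet := mem_edgeSet'.mpr hab
  have hmem' : s(x, y) ∉ H.edgeSet \ {s(a, b)} := fun h => hnm h.1
  have hcV := ncard_edgeSet_of_isTree hH
  have hpos : 0 < H.edgeSet.ncard := (Set.ncard_pos (Set.toFinite _)).mpr ⟨_, habm⟩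
  have hcard : (H.deleteEdges {s(a, b)} ⊔ fromEdgeSet {s(x, y)}).edgeSet.ncard + 1
      = Fintype.card V := by
    rw [hES, Set.union_singleton, Set.ncard_insert_of_notMem hmem' (Set.toFinite _),
      Set.ncard_diff_singleton_of_mem habm]
    omega
  exact ⟨isTree_of_connected_of_ncard hconn hcard, hES⟩

lemma gweight_eq [Fintype V] [DecidableEq V] {H' H : SimpleGraph V} {g h : Sym2 V}
    (w : Sym2 V → ℝ) (hE : H'.edgeSet = (H.edgeSet \ {g}) ∪ {h})
    (hg : g ∈ H.edgeSet) (hh : h ∉ H.edgeSet) :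
    gweight H' w = gweight H w - w g + w h := by
  classical
  unfold gweight
  have hset : H'.edgeSet.toFinite.toFinset
      = insert h ((H.edgeSet.toFinite.toFinset).erase g) := by
    ext e
    simp only [Set.Finite.mem_toFinset, hE, Set.mem_union, Set.mem_diff,
      Set.mem_singleton_iff, Finset.mem_insert, Finset.mem_erase]
    tauto
  rw [hset, Finset.sum_insert (by simp only [Finset.mem_erase, Set.Finite.mem_toFinset]; exact fun hc => hh hc.2),
    Finset.sum_erase_eq_sub ((Set.Finite.mem_toFinset _).mpr hg)]
  ring

lemma exists_mst [Fintype V] [DecidableEq V] (H : SimpleGraph V) (hH : H.Connected)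
    (w : Sym2 V → ℝ) : ∃ T, IsMST H T w := by
  classical
  obtain ⟨T0, h1, h2⟩ := exists_spanning_tree H hH
  obtain ⟨T, hT, hmin⟩ := Set.exists_min_image {T' | IsSpanningTree H T'} (gweight · w)
    (Set.toFinite _) ⟨T0, h1, h2⟩
  exact ⟨T, hT, hmin⟩

end Aux

/-- in a bridgeless connected graph with distinct weights, the most
vital edge (maximizing the MST weight of the remaining graph) is an edge of the MST. -/
theorem stmt11 {V : Type*} [Fintype V] [DecidableEq V]
    (G T : SimpleGraph V) (w : Sym2 V → ℝ)
    (hG : G.Connected) (hw : Set.InjOn w G.edgeSet)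
    (hnb : ∀ e ∈ G.edgeSet, ¬ G.IsBridge e)
    (hT : IsMST G T w)
    (e' : Sym2 V) (he' : e' ∈ G.edgeSet)
    (hmax : ∀ e ∈ G.edgeSet, ∀ T1 T2 : SimpleGraph V,
      IsMST (G.deleteEdges {e}) T1 w → IsMST (G.deleteEdges {e'}) T2 w →
      gweight T1 w ≤ gweight T2 w) :
    e' ∈ T.edgeSet := by
  classical
  by_contra he'T
  obtain ⟨⟨hTle, hTtree⟩, hTmin⟩ := hT
  -- `T` is also an MST of `G - e'`
  have hTle' : T ≤ G.deleteEdges {e'} := by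
    intro u v huv
    rw [deleteEdges_adj]
    refine ⟨hTle huv, ?_⟩
    simp only [Set.mem_singleton_iff]
    rintro rfl
    exact he'T (mem_edgeSet'.mpr huv)
  have hTmst' : IsMST (G.deleteEdges {e'}) T w :=
    ⟨⟨hTle', hTtree⟩, fun T' hT' => hTmin T' ⟨hT'.1.trans (deleteEdges_le _), hT'.2⟩⟩
  -- pick an edge `s(p0, c)` of `T`
  obtain ⟨p0, q0, he'eq, hadj0⟩ := edge_rep he'
  obtain ⟨wpq⟩ := hTtree.isConnected p0 q0
  cases wpq with
  | nil => exact hadj0.ne rfl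
  | @cons _ c _ h q' =>
    have heT : s(p0, c) ∈ T.edgeSet := mem_edgeSet'.mpr h
    have heG : s(p0, c) ∈ G.edgeSet := edgeSet_mono hTle heT
    have hnbr := hnb _ heG
    rw [isBridge_iff] at hnbr
    push_neg at hnbr
    have hre : (G.deleteEdges {s(p0, c)}).Reachable p0 c := by
      rw [← sdiff_fromEdgeSet_eq]
      exact hnbr
    have hGecon : (G.deleteEdges {s(p0, c)}).Connected := connected_deleteEdges hG hre
    obtain ⟨T1, hT1⟩ := exists_mst _ hGecon w
    have hg1 : gweight T1 w ≤ gweight T w := hmax _ heG T1 T hT1 hTmst'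
    have hT1G : IsSpanningTree G T1 := ⟨hT1.1.1.trans (deleteEdges_le _), hT1.1.2⟩
    have hg2 : gweight T w ≤ gweight T1 w := hTmin T1 hT1G
    have hgeq : gweight T1 w = gweight T w := le_antisymm hg1 hg2
    have heT1 : s(p0, c) ∉ T1.edgeSet := by
      intro hmem
      have hm2 := edgeSet_mono hT1.1.1 hmem
      rw [edgeSet_deleteEdges] at hm2
      exact hm2.2 rfl
    -- a path in `T1` between the endpoints of the deleted edge
    obtain ⟨wab⟩ := hT1.1.2.isConnected p0 c
    obtain ⟨P1, hP1⟩ := wab.toPath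
    have hqnd : P1.edges.Nodup := hP1.1.edges_nodup
    -- the crossing edge `s(x, y)`
    have hPb : ¬ (T.deleteEdges {s(p0, c)}).Reachable c p0 := by
      have hbr : T.IsBridge s(p0, c) :=
        (isAcyclic_iff_forall_edge_isBridge.mp hTtree.2) heT
      rw [isBridge_iff] at hbr
      intro hr
      apply hbr
      exact hr.symm
    obtain ⟨x, y, hadjxy, hmemq, hPx, hPy⟩ :=
      exists_crossing_edge (fun v => (T.deleteEdges {s(p0, c)}).Reachable v p0)
        P1 (Reachable.refl _) hPb
    have hfT1 : s(x, y) ∈ T1.edgeSet := mem_edgeSet'.mpr hadjxy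
    have hfG : s(x, y) ∈ G.edgeSet := edgeSet_mono hT1G.1 hfT1
    have hfne : s(x, y) ≠ s(p0, c) := by
      intro hh
      rw [hh] at hfT1
      exact heT1 hfT1
    have hfT : s(x, y) ∉ T.edgeSet := by
      intro hmem
      apply hPy
      have hadj' : (T.deleteEdges {s(p0, c)}).Adj x y := by
        rw [deleteEdges_adj]
        exact ⟨mem_edgeSet'.mp hmem, by simpa using hfne⟩
      exact hadj'.symm.reachable.trans hPx
    have hyb : (T.deleteEdges {s(p0, c)}).Reachable y c := by
      rcases reach_endpoint hTtree.isConnected p0 c y with h' | h'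
      · exact absurd h' hPy
      · exact h'
    -- first swap: `T - s(p0,c) + s(x,y)` is a spanning tree of `G`
    obtain ⟨hT'tree, hT'E⟩ := swap_tree hTtree h hadjxy.ne hfT (Or.inl ⟨hPx.symm, hyb.symm⟩)
    have hT'le : T.deleteEdges {s(p0, c)} ⊔ fromEdgeSet {s(x, y)} ≤ G := by
      apply sup_le ((deleteEdges_le _).trans hTle)
      intro u v huv
      rw [fromEdgeSet_adj] at huv
      obtain ⟨h1, _⟩ := huv
      rw [Set.mem_singleton_iff] at h1
      exact mem_edgeSet'.mp (by rw [h1]; exact hfG)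
    have hgT' := gweight_eq w hT'E heT hfT
    have hle1 := hTmin _ ⟨hT'le, hT'tree⟩
    have hwef : w s(p0, c) ≤ w s(x, y) := by linarith [hle1, hgT']
    have hwlt : w s(p0, c) < w s(x, y) :=
      lt_of_le_of_ne hwef (fun hh => hfne (hw hfG heG hh.symm))
    -- second swap: `T1 - s(x,y) + s(p0,c)` is a spanning tree of `G`
    obtain ⟨z, z', hzw, hrz, hrw⟩ := path_split P1 hqnd hmemq
    have hcross2 :
        ((T1.deleteEdges {s(x, y)}).Reachable x p0 ∧ (T1.deleteEdges {s(x, y)}).Reachable y c) ∨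
        ((T1.deleteEdges {s(x, y)}).Reachable x c ∧ (T1.deleteEdges {s(x, y)}).Reachable y p0) := by
      rcases Sym2.eq_iff.mp hzw with ⟨rfl, rfl⟩ | ⟨rfl, rfl⟩
      · exact Or.inl ⟨hrz.symm, hrw.symm⟩
      · exact Or.inr ⟨hrw.symm, hrz.symm⟩
    obtain ⟨hT1'tree, hT1'E⟩ := swap_tree hT1.1.2 hadjxy (hTle h).ne heT1 hcross2
    have hT1'le : T1.deleteEdges {s(x, y)} ⊔ fromEdgeSet {s(p0, c)} ≤ G := by
      apply sup_le ((deleteEdges_le _).trans hT1G.1)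
      intro u v huv
      rw [fromEdgeSet_adj] at huv
      obtain ⟨h1, _⟩ := huv
      rw [Set.mem_singleton_iff] at h1
      exact mem_edgeSet'.mp (by rw [h1]; exact heG)
    have hgT1' := gweight_eq w hT1'E hfT1 heT1
    have hle2 := hTmin _ ⟨hT1'le, hT1'tree⟩
    linarith [hle2, hgT1', hgeq, hwlt]
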